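/- arXiv:1401.0880 — 3 statements merged into one kernel-verified Lean document; each statement's English description precedes it below -/
import Mathlib

section
/- (Lattice structure of tight sets) Let f : Λⁿ → ℝ be nonnegative, w a product weight on Λⁿ, g_i : Λ^{n-1} → ℝ nonnegative, and λ > 0. Suppose the inequality ∑_{b ∈ S} w(b) f(b) ≤ λ ∑_{i=1}^n ∑_{b_{-i} ∈ S_{-i}} g_i(b_{-i}) w(b_{-i}) holds for all upward closed S ⊆ Λⁿ, where S_{-i} is the projection of S along coordinate i. If the inequality holds with equality for two upward closed sets S₁ and S₂, then it also holds with equality for S₁ ∪ S₂ and S₁ ∩ S₂. -/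
open Finset

/-- Product weight on a bid vector. -/
def W {Λ : Type*} {n : ℕ} (wΛ : Λ → ℝ) (b : Fin n → Λ) : ℝ := ∏ k, wΛ (b k)

/-- Product weight on a vector with coordinate `i` removed. -/
def Wmi {Λ : Type*} {n : ℕ} (wΛ : Λ → ℝ) (i : Fin n)
    (c : {j : Fin n // j ≠ i} → Λ) : ℝ := ∏ j, wΛ (c j)

/-- Projection of a set of bid vectors along coordinate `i`. -/
def proj {Λ : Type*} [DecidableEq Λ] {n : ℕ} (i : Fin n)
    (S : Finset (Fin n → Λ)) : Finset ({j : Fin n // j ≠ i} → Λ) :=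
  S.image (fun b j => b j.1)

/-- Upward closedness under the coordinatewise order. -/
def UpClosed {Λ : Type*} [LinearOrder Λ] {n : ℕ} (S : Finset (Fin n → Λ)) : Prop :=
  ∀ b ∈ S, ∀ b' : Fin n → Λ, b ≤ b' → b' ∈ S

theorem stmt_4 {Λ : Type*} [Fintype Λ] [LinearOrder Λ] [DecidableEq Λ] {n : ℕ}
    (wΛ : Λ → ℝ) (hw : ∀ a, 0 < wΛ a)
    (f : (Fin n → Λ) → ℝ) (hf : ∀ b, 0 ≤ f b)
    (g : (i : Fin n) → ({j : Fin n // j ≠ i} → Λ) → ℝ) (hg : ∀ i c, 0 ≤ g i c)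
    (lam : ℝ) (hlam : 0 < lam)
    (hineq : ∀ S : Finset (Fin n → Λ), UpClosed S →
      ∑ b ∈ S, W wΛ b * f b ≤ lam * ∑ i, ∑ c ∈ proj i S, g i c * Wmi wΛ i c)
    (S₁ S₂ : Finset (Fin n → Λ)) (h₁ : UpClosed S₁) (h₂ : UpClosed S₂)
    (e₁ : ∑ b ∈ S₁, W wΛ b * f b = lam * ∑ i, ∑ c ∈ proj i S₁, g i c * Wmi wΛ i c)
    (e₂ : ∑ b ∈ S₂, W wΛ b * f b = lam * ∑ i, ∑ c ∈ proj i S₂, g i c * Wmi wΛ i c) :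
    (∑ b ∈ S₁ ∪ S₂, W wΛ b * f b
        = lam * ∑ i, ∑ c ∈ proj i (S₁ ∪ S₂), g i c * Wmi wΛ i c) ∧
    (∑ b ∈ S₁ ∩ S₂, W wΛ b * f b
        = lam * ∑ i, ∑ c ∈ proj i (S₁ ∩ S₂), g i c * Wmi wΛ i c) := by
  -- abbreviations
  set A : Finset (Fin n → Λ) → ℝ := fun S => ∑ b ∈ S, W wΛ b * f b with hA
  set B : Finset (Fin n → Λ) → ℝ := fun S => ∑ i, ∑ c ∈ proj i S, g i c * Wmi wΛ i c with hB
  have hU : UpClosed (S₁ ∪ S₂) := by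
    intro b hb b' hbb'
    rcases Finset.mem_union.1 hb with h | h
    · exact Finset.mem_union.2 (Or.inl (h₁ b h b' hbb'))
    · exact Finset.mem_union.2 (Or.inr (h₂ b h b' hbb'))
  have hI : UpClosed (S₁ ∩ S₂) := by
    intro b hb b' hbb'
    rcases Finset.mem_inter.1 hb with ⟨ha, hb2⟩
    exact Finset.mem_inter.2 ⟨h₁ b ha b' hbb', h₂ b hb2 b' hbb'⟩
  have hAsum : A (S₁ ∪ S₂) + A (S₁ ∩ S₂) = A S₁ + A S₂ := by
    simpa [hA] using Finset.sum_union_inter (s₁ := S₁) (s₂ := S₂)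
      (f := fun b => W wΛ b * f b)
  have hterm : ∀ (i : Fin n) (c : {j : Fin n // j ≠ i} → Λ), 0 ≤ g i c * Wmi wΛ i c := by
    intro i c
    exact mul_nonneg (hg i c) (Finset.prod_nonneg fun j _ => (hw (c j)).le)
  have hBsum : B (S₁ ∪ S₂) + B (S₁ ∩ S₂) ≤ B S₁ + B S₂ := by
    rw [hB]
    simp only
    rw [← Finset.sum_add_distrib, ← Finset.sum_add_distrib]
    apply Finset.sum_le_sum
    intro i _
    have hpu : proj i (S₁ ∪ S₂) = proj i S₁ ∪ proj i S₂ := Finset.image_union _ _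
    have hpi : proj i (S₁ ∩ S₂) ⊆ proj i S₁ ∩ proj i S₂ := Finset.image_inter_subset _ _ _
    have h1 : ∑ c ∈ proj i (S₁ ∩ S₂), g i c * Wmi wΛ i c
        ≤ ∑ c ∈ proj i S₁ ∩ proj i S₂, g i c * Wmi wΛ i c :=
      Finset.sum_le_sum_of_subset_of_nonneg hpi (fun c _ _ => hterm i c)
    have h2 : ∑ c ∈ proj i S₁ ∪ proj i S₂, g i c * Wmi wΛ i c
        + ∑ c ∈ proj i S₁ ∩ proj i S₂, g i c * Wmi wΛ i c
        = ∑ c ∈ proj i S₁, g i c * Wmi wΛ i c + ∑ c ∈ proj i S₂, g i c * Wmi wΛ i c :=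
      Finset.sum_union_inter
    rw [hpu]
    linarith
  have hu := hineq (S₁ ∪ S₂) hU
  have hi := hineq (S₁ ∩ S₂) hI
  have key : A (S₁ ∪ S₂) + A (S₁ ∩ S₂) = lam * B (S₁ ∪ S₂) + lam * B (S₁ ∩ S₂) := by
    have : lam * B (S₁ ∪ S₂) + lam * B (S₁ ∩ S₂) ≤ lam * B S₁ + lam * B S₂ := by
      have := mul_le_mul_of_nonneg_left hBsum hlam.le
      linarith [this]
    simp only [hA, hB] at *
    linarith [hu, hi]
  constructor
  · have : A (S₁ ∪ S₂) = lam * B (S₁ ∪ S₂) := by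
      simp only [hA, hB] at *
      linarith [hu, hi]
    simpa [hA, hB] using this
  · have : A (S₁ ∩ S₂) = lam * B (S₁ ∩ S₂) := by
      simp only [hA, hB] at *
      linarith [hu, hi]
    simpa [hA, hB] using this
end

section
/- (Projection inequality) For any two upward closed sets S₁, S₂ in Λⁿ (Λⁿ with the product order) and any coordinate i, the indicator functions of projections satisfy 1_{(S₁∪S₂)_{-i}} + 1_{(S₁∩S₂)_{-i}} ≤ 1_{S₁_{-i}} + 1_{S₂_{-i}} pointwise on Λ^{n-1}. -/
/-- Projection of a set of vectors along coordinate `i`. -/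
def projS {Λ : Type*} {n : ℕ} (i : Fin n) (S : Set (Fin n → Λ)) :
    Set ({j : Fin n // j ≠ i} → Λ) :=
  {c | ∃ b ∈ S, ∀ j : {j : Fin n // j ≠ i}, b j.1 = c j}

theorem stmt_5 {Λ : Type*} [LinearOrder Λ] {n : ℕ}
    (S₁ S₂ : Set (Fin n → Λ))
    (h₁ : ∀ b ∈ S₁, ∀ b' : Fin n → Λ, b ≤ b' → b' ∈ S₁)
    (h₂ : ∀ b ∈ S₂, ∀ b' : Fin n → Λ, b ≤ b' → b' ∈ S₂)
    (i : Fin n) (c : {j : Fin n // j ≠ i} → Λ) :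
    (projS i (S₁ ∪ S₂)).indicator (fun _ => (1 : ℝ)) c
      + (projS i (S₁ ∩ S₂)).indicator (fun _ => (1 : ℝ)) c
      ≤ (projS i S₁).indicator (fun _ => (1 : ℝ)) c
      + (projS i S₂).indicator (fun _ => (1 : ℝ)) c := by
  have hU : c ∈ projS i (S₁ ∪ S₂) ↔ c ∈ projS i S₁ ∨ c ∈ projS i S₂ := by
    constructor
    · rintro ⟨b, hb | hb, h⟩
      exacts [Or.inl ⟨b, hb, h⟩, Or.inr ⟨b, hb, h⟩]
    · rintro (⟨b, hb, h⟩ | ⟨b, hb, h⟩)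
      exacts [⟨b, Or.inl hb, h⟩, ⟨b, Or.inr hb, h⟩]
  have hI : c ∈ projS i (S₁ ∩ S₂) → c ∈ projS i S₁ ∧ c ∈ projS i S₂ := by
    rintro ⟨b, ⟨hb1, hb2⟩, h⟩
    exact ⟨⟨b, hb1, h⟩, ⟨b, hb2, h⟩⟩
  classical
  rw [Set.indicator_apply, Set.indicator_apply, Set.indicator_apply, Set.indicator_apply]
  split_ifs <;> try norm_num
  · exact ‹c ∉ projS i S₂› (hI ‹_›).2
  · exact ‹c ∉ projS i S₁› (hI ‹_›).1
  · exact ‹c ∉ projS i S₁› (hI ‹_›).1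
  · rcases hU.mp ‹_› with h | h
    · exact ‹c ∉ projS i S₁› h
    · exact ‹c ∉ projS i S₂› h
  · exact ‹c ∉ projS i S₁› (hI ‹_›).1
end

section
/- (Closed-form integral computation) For n ≥ 2, ∫_{n−1}^{∞} [1 − (z−n+1)(z+1)^{n−1} / zⁿ] dz = (1/(n−1)^{n−1}) · (nⁿ − (n−1)ⁿ − n(n−1)^{n−1}). -/
/-!
With `k = n - 1`, the integrand is the derivative of `G z = z - (z + 1) ^ (k + 1) / z ^ k`, and it is
nonnegative because `(z - k) (z + 1) ^ k ≤ z ^ (k + 1)` for `z ≥ 0`. Writing `G z = z (1 - (1 + 1/z) ^ n)`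
shows `G z → -n` at infinity, so the integral equals `-n - G (n - 1)`.
-/

open MeasureTheory Filter Set Topology

lemma sub_mul_add_one_pow_le_pow_succ (k : ℕ) {z : ℝ} (hz : 0 ≤ z) :
    (z - k) * (z + 1) ^ k ≤ z ^ (k + 1) := by
  induction k with
  | zero => simp
  | succ k ih =>
    calc (z - (k + 1 : ℕ)) * (z + 1) ^ (k + 1)
        = ((z - k - 1) * (z + 1)) * (z + 1) ^ k := by push_cast; ring
      _ ≤ (z * (z - k)) * (z + 1) ^ k := by
          gcongr ?_ * _
          nlinarith
      _ = z * ((z - k) * (z + 1) ^ k) := by ring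
      _ ≤ z * z ^ (k + 1) := by gcongr
      _ = z ^ (k + 1 + 1) := by ring

-- `z (1 - (1 + 1/z) ^ n)` is minus a difference quotient of `u ↦ (1 + u) ^ n` at `0`.
lemma tendsto_mul_one_sub_one_add_inv_pow (n : ℕ) :
    Tendsto (fun z : ℝ => z * (1 - (1 + z⁻¹) ^ n)) atTop (𝓝 (-n)) := by
  have hderiv : HasDerivAt (fun u : ℝ => (1 + u) ^ n) n 0 := by
    simpa using ((hasDerivAt_id (0 : ℝ)).const_add 1).fun_pow n
  have hslope := (hasDerivAt_iff_tendsto_slope.mp hderiv).comp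
    (tendsto_inv_atTop_nhdsGT_zero.mono_right (nhdsWithin_mono _ fun _ h => ne_of_gt h))
  refine hslope.neg.congr' ?_
  filter_upwards [eventually_gt_atTop (0 : ℝ)] with z hz
  simp only [Function.comp_apply, slope_def_field, add_zero, one_pow, sub_zero, div_inv_eq_mul]
  field_simp
  ring

lemma hasDerivAt_sub_add_one_pow_succ_div_pow (k : ℕ) {z : ℝ} (hz : z ≠ 0) :
    HasDerivAt (fun z : ℝ => z - (z + 1) ^ (k + 1) / z ^ k)
      (1 - (z - k) * (z + 1) ^ k / z ^ (k + 1)) z := by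
  have hnum : HasDerivAt (fun z : ℝ => (z + 1) ^ (k + 1)) ((k + 1 : ℕ) * (z + 1) ^ k) z := by
    simpa using ((hasDerivAt_id z).add_const 1).fun_pow (k + 1)
  refine ((hasDerivAt_id' z).fun_sub
    (hnum.fun_div (hasDerivAt_pow k z) (pow_ne_zero k hz))).congr_deriv ?_
  rcases k with _ | k
  · simp [hz]
  · field_simp
    push_cast
    ring

lemma one_sub_sub_mul_add_one_pow_div_pow_succ_nonneg (k : ℕ) {z : ℝ} (hz : 0 < z) :
    0 ≤ 1 - (z - k) * (z + 1) ^ k / z ^ (k + 1) := by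
  rw [sub_nonneg, div_le_one (by positivity)]
  exact sub_mul_add_one_pow_le_pow_succ k hz.le

lemma integral_Ioi_one_sub_sub_mul_add_one_pow_div_pow_succ (k : ℕ) {a : ℝ} (ha : 0 < a) :
    ∫ z in Ioi a, (1 - (z - k) * (z + 1) ^ k / z ^ (k + 1))
      = -(k + 1) - (a - (a + 1) ^ (k + 1) / a ^ k) := by
  have hlim : Tendsto (fun z : ℝ => z - (z + 1) ^ (k + 1) / z ^ k) atTop (𝓝 (-(k + 1))) := by
    have h := tendsto_mul_one_sub_one_add_inv_pow (k + 1)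
    push_cast at h
    refine h.congr' ?_
    filter_upwards [eventually_gt_atTop (0 : ℝ)] with z hz
    rw [show 1 + z⁻¹ = (z + 1) / z by field_simp, div_pow]
    field_simp
    ring
  refine integral_Ioi_of_hasDerivAt_of_nonneg
    (hasDerivAt_sub_add_one_pow_succ_div_pow k ha.ne').continuousAt.continuousWithinAt
    (fun z hz => hasDerivAt_sub_add_one_pow_succ_div_pow k (ha.trans hz).ne')
    (fun z hz => one_sub_sub_mul_add_one_pow_div_pow_succ_nonneg k (ha.trans hz)) hlim

theorem stmt_13 (n : ℕ) (hn : 2 ≤ n) :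
    ∫ z in Set.Ici ((n : ℝ) - 1),
        (1 - (z - (n : ℝ) + 1) * (z + 1) ^ (n - 1) / z ^ n)
      = (1 / ((n : ℝ) - 1) ^ (n - 1))
          * ((n : ℝ) ^ n - ((n : ℝ) - 1) ^ n - (n : ℝ) * ((n : ℝ) - 1) ^ (n - 1)) := by
  obtain ⟨k, rfl⟩ : ∃ k, n = k + 1 := ⟨n - 1, by omega⟩
  have hk : (0 : ℝ) < k := by exact_mod_cast (by omega : 0 < k)
  have hsub : ((k + 1 : ℕ) : ℝ) - 1 = k := by push_cast; ring
  simp only [hsub, Nat.add_sub_cancel, integral_Ici_eq_integral_Ioi]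
  have hintegrand : ∀ z : ℝ, z - ((k + 1 : ℕ) : ℝ) + 1 = z - k := fun z => by push_cast; ring
  simp only [hintegrand, integral_Ioi_one_sub_sub_mul_add_one_pow_div_pow_succ k hk]
  field_simp
  push_cast
  ring
end
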